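/- Soundness of Skolemization for validity in prenex G△: let F = A₁ ∧ ⋯ ∧ Aₘ where each Aᵢ is a closed prenex formula of first-order Gödel logic with △, and let ∃x̄ Aᵢ^S(x̄) be the Skolem form of Aᵢ. Then F is valid if and only if the conjunction over i = 1,…,m of ∃x̄ Aᵢ^S(x̄) is valid. -/

import Mathlib

/-! Semantics of first-order Gödel logic with the projection operator `△` (G△),
with truth values in the complete lattice `[0,1]`. -/

/-- The unit interval `[0,1]` is a complete lattice. -/
instance : Fact ((0:ℝ) ≤ 1) := ⟨zero_le_one⟩

/-- Gödel implication on `[0,1]`. -/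
noncomputable def gimp (a b : unitInterval) : unitInterval := if a ≤ b then 1 else b

/-- The projection `△` on `[0,1]`. -/
noncomputable def gdelta (a : unitInterval) : unitInterval := if a = 1 then 1 else 0

/-- A first-order signature: function symbols and predicate symbols with arities. -/
structure Signature : Type 1 where
  Func : Type
  fArity : Func → ℕ
  Pred : Type
  pArity : Pred → ℕ

/-- Terms over a signature; variables are indexed by natural numbers. -/
inductive Term (S : Signature) : Type where
  | var (n : ℕ) : Term S
  | func (f : S.Func) (args : Fin (S.fArity f) → Term S) : Term S

namespace Term

variable {S : Signature}

/-- The set of variables occurring in a term. -/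
def vars : Term S → Set ℕ
  | .var n => {n}
  | .func _ args => ⋃ i, (args i).vars

/-- The set of function symbols (including constants) occurring in a term. -/
def funcsIn : Term S → Set S.Func
  | .var _ => ∅
  | .func f args => insert f (⋃ i, (args i).funcsIn)

/-- A term is ground if it contains no variables. -/
def isGround : Term S → Prop
  | .var _ => False
  | .func _ args => ∀ i, (args i).isGround

/-- Simultaneous substitution of terms for variables in a term. -/
def subst (σ : ℕ → Term S) : Term S → Term S
  | .var n => σ n
  | .func f args => .func f (fun i => (args i).subst σ)

end Term

/-- Formulas of first-order Gödel logic with `△`. -/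
inductive Formula (S : Signature) : Type where
  | bot : Formula S
  | top : Formula S
  | atom (p : S.Pred) (args : Fin (S.pArity p) → Term S) : Formula S
  | and (A B : Formula S) : Formula S
  | or (A B : Formula S) : Formula S
  | imp (A B : Formula S) : Formula S
  | delta (A : Formula S) : Formula S
  | all (x : ℕ) (A : Formula S) : Formula S
  | ex (x : ℕ) (A : Formula S) : Formula S

namespace Formula

variable {S : Signature}

/-- Gödel negation `¬A := A → ⊥`. -/
def neg (A : Formula S) : Formula S := A.imp .bot

/-- The set of free variables of a formula. -/
def freeVars : Formula S → Set ℕ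
  | .bot => ∅
  | .top => ∅
  | .atom _ args => ⋃ i, (args i).vars
  | .and A B => A.freeVars ∪ B.freeVars
  | .or A B => A.freeVars ∪ B.freeVars
  | .imp A B => A.freeVars ∪ B.freeVars
  | .delta A => A.freeVars
  | .all x A => A.freeVars \ {x}
  | .ex x A => A.freeVars \ {x}

/-- The set of function symbols occurring in a formula. -/
def funcsIn : Formula S → Set S.Func
  | .bot => ∅
  | .top => ∅
  | .atom _ args => ⋃ i, (args i).funcsIn
  | .and A B => A.funcsIn ∪ B.funcsIn
  | .or A B => A.funcsIn ∪ B.funcsIn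
  | .imp A B => A.funcsIn ∪ B.funcsIn
  | .delta A => A.funcsIn
  | .all _ A => A.funcsIn
  | .ex _ A => A.funcsIn

/-- The set of predicate symbols occurring in a formula. -/
def predsIn : Formula S → Set S.Pred
  | .bot => ∅
  | .top => ∅
  | .atom p _ => {p}
  | .and A B => A.predsIn ∪ B.predsIn
  | .or A B => A.predsIn ∪ B.predsIn
  | .imp A B => A.predsIn ∪ B.predsIn
  | .delta A => A.predsIn
  | .all _ A => A.predsIn
  | .ex _ A => A.predsIn

/-- A formula is quantifier free. -/
def isQF : Formula S → Prop
  | .bot => True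
  | .top => True
  | .atom _ _ => True
  | .and A B => A.isQF ∧ B.isQF
  | .or A B => A.isQF ∧ B.isQF
  | .imp A B => A.isQF ∧ B.isQF
  | .delta A => A.isQF
  | .all _ _ => False
  | .ex _ _ => False

/-- Simultaneous substitution of terms for the free variables of a formula
(bound variables are left untouched). -/
def subst (σ : ℕ → Term S) : Formula S → Formula S
  | .bot => .bot
  | .top => .top
  | .atom p args => .atom p (fun i => (args i).subst σ)
  | .and A B => .and (A.subst σ) (B.subst σ)
  | .or A B => .or (A.subst σ) (B.subst σ)
  | .imp A B => .imp (A.subst σ) (B.subst σ)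
  | .delta A => .delta (A.subst σ)
  | .all x A => .all x (A.subst (Function.update σ x (.var x)))
  | .ex x A => .ex x (A.subst (Function.update σ x (.var x)))

/-- Substitution of a single term `t` for the variable `x`. -/
def subst1 (x : ℕ) (t : Term S) (A : Formula S) : Formula S :=
  A.subst (fun n => if n = x then t else .var n)

end Formula

/-- An interpretation: a nonempty domain, interpretations of the function symbols,
and `[0,1]`-valued interpretations of the predicate symbols. -/
structure Interp (S : Signature) : Type 1 where
  D : Type
  dNe : Nonempty D
  fI : ∀ f : S.Func, (Fin (S.fArity f) → D) → D
  pI : ∀ p : S.Pred, (Fin (S.pArity p) → D) → unitInterval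

attribute [instance] Interp.dNe

/-- Evaluation of a term in an interpretation under a variable assignment. -/
def Term.eval {S : Signature} (I : Interp S) (μ : ℕ → I.D) : Term S → I.D
  | .var n => μ n
  | .func f args => I.fI f (fun i => (args i).eval I μ)

/-- The Gödel value `‖A‖ ∈ [0,1]` of a formula in an interpretation under a variable
assignment; `∀` is interpreted by the infimum and `∃` by the supremum. -/
noncomputable def Formula.val {S : Signature} (I : Interp S) (μ : ℕ → I.D) :
    Formula S → unitInterval
  | .bot => 0
  | .top => 1
  | .atom p args => I.pI p (fun i => (args i).eval I μ)
  | .and A B => min (A.val I μ) (B.val I μ)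
  | .or A B => max (A.val I μ) (B.val I μ)
  | .imp A B => gimp (A.val I μ) (B.val I μ)
  | .delta A => gdelta (A.val I μ)
  | .all x A => ⨅ d : I.D, A.val I (Function.update μ x d)
  | .ex x A => ⨆ d : I.D, A.val I (Function.update μ x d)

/-- A formula is valid if it takes value `1` in every interpretation, under every
variable assignment. -/
def valid {S : Signature} (A : Formula S) : Prop :=
  ∀ (I : Interp S) (μ : ℕ → I.D), A.val I μ = 1

/-- A formula is 1-satisfiable if it takes value `1` in some interpretation. -/
def sat1 {S : Signature} (A : Formula S) : Prop :=
  ∃ (I : Interp S) (μ : ℕ → I.D), A.val I μ = 1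

/-- `exCloseList [x₁,…,xₙ] P = ∃x₁ … ∃xₙ P`. -/
def exCloseList {S : Signature} : List ℕ → Formula S → Formula S
  | [], P => P
  | x :: xs, P => .ex x (exCloseList xs P)

/-- `allCloseList [x₁,…,xₙ] P = ∀x₁ … ∀xₙ P`. -/
def allCloseList {S : Signature} : List ℕ → Formula S → Formula S
  | [], P => P
  | x :: xs, P => .all x (allCloseList xs P)

/-- `buildPrenex [Q₁,…,Qₙ] i P = Q₁ zᵢ Q₂ z_{i+1} … Qₙ z_{i+n-1} P`, where `true`
codes `∀` and `false` codes `∃`; the bound variables are the indices `i, i+1, …`. -/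
def buildPrenex {S : Signature} : List Bool → ℕ → Formula S → Formula S
  | [], _, P => P
  | b :: rest, i, P =>
      if b then .all i (buildPrenex rest (i + 1) P)
      else .ex i (buildPrenex rest (i + 1) P)

/-- The positions (= variables) of the existential quantifiers in a prenex prefix. -/
def exPos (pref : List Bool) : List ℕ :=
  (List.range pref.length).filter (fun i => pref.getD i true = false)

/-- The positions (= variables) of the universal quantifiers in a prenex prefix. -/
def univPos (pref : List Bool) : List ℕ :=
  (List.range pref.length).filter (fun i => pref.getD i false = true)

/-- `bigOr A [B₁,…,Bₙ] = A ∨ B₁ ∨ … ∨ Bₙ`. -/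
def bigOr {S : Signature} : Formula S → List (Formula S) → Formula S
  | A, [] => A
  | A, B :: rest => .or A (bigOr B rest)

/-- `bigAnd A [B₁,…,Bₙ] = A ∧ B₁ ∧ … ∧ Bₙ`. -/
def bigAnd {S : Signature} : Formula S → List (Formula S) → Formula S
  | A, [] => A
  | A, B :: rest => .and A (bigAnd B rest)

/-- The (validity) Skolem substitution for a prenex prefix `pref`: each universally
quantified variable `i` is replaced by the Skolem term `sk i (ȳ)`, where `ȳ` are the
existentially quantified variables `< i`; existential variables are kept. -/
def skSubstVal {S : Signature} (pref : List Bool) (sk : ℕ → S.Func) : ℕ → Term S :=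
  fun i =>
    if pref.getD i false = true then
      Term.func (sk i) (fun j => Term.var ((exPos (pref.take i)).getD (j : ℕ) 0))
    else Term.var i

/-- The Skolem form `∃x̄ P^S(x̄)` of the prenex formula with prefix `pref` and
quantifier-free matrix `P`. -/
def skolemFormVal {S : Signature} (pref : List Bool) (sk : ℕ → S.Func)
    (P : Formula S) : Formula S :=
  exCloseList (exPos pref) (P.subst (skSubstVal pref sk))

/-! A Skolem form, evaluated in an interpretation, is the supremum over assignments `ν` of the
matrix at the assignment in which every universal variable takes the value of its Skolem term.
That assignment is the play of a strategy for the universal quantifiers which sees only the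
earlier existential variables, and since the Skolem symbols are fresh, every such strategy is
realised by reinterpreting them. So it suffices to show that the value of a closed prenex
formula is at most the supremum of its matrix along any strategy (instantiate each `∀` by the
strategy's move), and that if the value is below `c`, some strategy keeps the matrix below `c`
(at each `∀` pick a witness of the infimum being below `c`). If a prenex formula has value
`< 1`, choosing `c` strictly between that value and `1` then gives a Skolem form of value
`≤ c < 1`. -/

section

variable {S : Signature}

namespace Term

theorem eval_congr (I : Interp S) {μ μ' : ℕ → I.D} (t : Term S)
    (h : ∀ n ∈ t.vars, μ n = μ' n) : t.eval I μ = t.eval I μ' := by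
  induction t with
  | var n => exact h n rfl
  | func f args ih =>
    simp only [vars, Set.mem_iUnion] at h
    simp only [eval]
    congr 1
    funext i
    exact ih i fun n hn => h n ⟨i, hn⟩

theorem eval_subst (I : Interp S) (μ : ℕ → I.D) (σ : ℕ → Term S) (t : Term S) :
    (t.subst σ).eval I μ = t.eval I (fun n => (σ n).eval I μ) := by
  induction t with
  | var n => rfl
  | func f args ih => simp only [subst, eval, ih]

theorem eval_withFuncs {I : Interp S} {g : ∀ f : S.Func, (Fin (S.fArity f) → I.D) → I.D}
    (μ : ℕ → I.D) (t : Term S) (hg : ∀ f ∈ t.funcsIn, g f = I.fI f) :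
    t.eval { I with fI := g } μ = t.eval I μ := by
  induction t with
  | var n => rfl
  | func f args ih =>
    simp only [funcsIn, Set.mem_insert_iff, Set.mem_iUnion] at hg
    simp only [eval, hg f (Or.inl rfl)]
    congr 1
    funext i
    exact ih i fun f' hf' => hg f' (Or.inr ⟨i, hf'⟩)

end Term

namespace Formula

theorem val_congr (I : Interp S) {μ μ' : ℕ → I.D} (A : Formula S)
    (h : ∀ n ∈ A.freeVars, μ n = μ' n) : A.val I μ = A.val I μ' := by
  induction A generalizing μ μ' with
  | bot | top => rfl
  | atom p args =>
    simp only [freeVars, Set.mem_iUnion] at h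
    simp only [val]
    congr 1
    funext i
    exact (args i).eval_congr I fun n hn => h n ⟨i, hn⟩
  | and A B ihA ihB | or A B ihA ihB | imp A B ihA ihB =>
    simp only [freeVars, Set.mem_union] at h
    simp only [val, ihA fun n hn => h n (Or.inl hn), ihB fun n hn => h n (Or.inr hn)]
  | delta A ih => simp only [val, ih h]
  | all x A ih | ex x A ih =>
    simp only [val]
    congr 1
    funext d
    refine ih fun n hn => ?_
    rcases eq_or_ne n x with rfl | hx
    · simp
    · simpa [hx] using h n ⟨hn, hx⟩

theorem val_subst_of_isQF (I : Interp S) (μ : ℕ → I.D) (σ : ℕ → Term S) {A : Formula S}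
    (hA : A.isQF) : (A.subst σ).val I μ = A.val I (fun n => (σ n).eval I μ) := by
  induction A with
  | bot | top => rfl
  | atom p args => simp only [subst, val, Term.eval_subst]
  | and A B ihA ihB | or A B ihA ihB | imp A B ihA ihB =>
    simp only [subst, val, ihA hA.1, ihB hA.2]
  | delta A ih => simp only [subst, val, ih hA]
  | all | ex => exact hA.elim

theorem val_withFuncs {I : Interp S} {g : ∀ f : S.Func, (Fin (S.fArity f) → I.D) → I.D}
    (μ : ℕ → I.D) (A : Formula S) (hg : ∀ f ∈ A.funcsIn, g f = I.fI f) :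
    A.val { I with fI := g } μ = A.val I μ := by
  induction A generalizing μ with
  | bot | top => rfl
  | atom p args =>
    simp only [funcsIn, Set.mem_iUnion] at hg
    simp only [val]
    congr 1
    funext i
    exact (args i).eval_withFuncs μ fun f hf => hg f ⟨i, hf⟩
  | and A B ihA ihB | or A B ihA ihB | imp A B ihA ihB =>
    simp only [funcsIn, Set.mem_union] at hg
    simp only [val, ihA _ fun f hf => hg f (Or.inl hf), ihB _ fun f hf => hg f (Or.inr hf)]
  | delta A ih => simp only [val, ih _ hg]
  | all x A ih | ex x A ih => simp only [val, ih _ hg]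

end Formula

theorem le_val_exCloseList (I : Interp S) (B : Formula S) {xs : List ℕ} {μ ν : ℕ → I.D}
    (h : ∀ n ∉ xs, ν n = μ n) : B.val I ν ≤ (exCloseList xs B).val I μ := by
  induction xs generalizing μ with
  | nil => rw [funext fun n => h n List.not_mem_nil]; rfl
  | cons x xs ih =>
    refine (ih fun n hn => ?_).trans
      (le_iSup (fun d => (exCloseList xs B).val I (Function.update μ x d)) (ν x))
    rcases eq_or_ne n x with rfl | hx
    · simp
    · simpa [hx] using h n (by simp [hx, hn])

theorem val_exCloseList_le (I : Interp S) (B : Formula S) {xs : List ℕ} {μ : ℕ → I.D}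
    {c : unitInterval} (h : ∀ ν : ℕ → I.D, (∀ n ∉ xs, ν n = μ n) → B.val I ν ≤ c) :
    (exCloseList xs B).val I μ ≤ c := by
  induction xs generalizing μ with
  | nil => exact h μ fun _ _ => rfl
  | cons x xs ih =>
    refine iSup_le fun d => ih fun ν hν => h ν fun n hn => ?_
    have hx : n ≠ x := fun e => hn (e ▸ List.mem_cons_self)
    simpa [hx] using hν n fun hn' => hn (List.mem_cons_of_mem x hn')

theorem mem_univPos {L : List Bool} {n : ℕ} : n ∈ univPos L ↔ L.getD n false = true := by
  simp only [univPos, List.mem_filter, List.mem_range, decide_eq_true_eq,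
    and_iff_right_iff_imp]
  intro h
  by_contra hn
  simp [List.getElem?_eq_none (not_lt.1 hn)] at h

theorem lt_length_of_mem_univPos {L : List Bool} {n : ℕ} (h : n ∈ univPos L) :
    n < L.length :=
  List.mem_range.1 (List.mem_of_mem_filter h)

theorem mem_exPos {L : List Bool} {n : ℕ} : n ∈ exPos L ↔ n < L.length ∧ n ∉ univPos L := by
  simp only [exPos, List.mem_filter, List.mem_range, decide_eq_true_eq, mem_univPos,
    Bool.not_eq_true, and_congr_right_iff]
  intro h
  rw [List.getD_eq_getElem _ _ h, List.getD_eq_getElem _ _ h]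

theorem mem_exPos_take {L : List Bool} {k n : ℕ} :
    n ∈ exPos (L.take k) ↔ n < k ∧ n ∈ exPos L := by
  simp only [mem_exPos, mem_univPos, List.length_take, lt_min_iff, List.getD_eq_getElem?_getD,
    List.getElem?_take]
  grind

section Prenex

variable (I : Interp S) (P : Formula S) {L : List Bool} {k : ℕ}

theorem val_buildPrenex_drop_of_mem_univPos (μ : ℕ → I.D) (hk : k ∈ univPos L) :
    (buildPrenex (L.drop k) k P).val I μ =
      ⨅ d, (buildPrenex (L.drop (k + 1)) (k + 1) P).val I (Function.update μ k d) := by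
  have hkL := lt_length_of_mem_univPos hk
  rw [mem_univPos, List.getD_eq_getElem _ _ hkL] at hk
  rw [List.drop_eq_getElem_cons hkL, buildPrenex, if_pos hk]
  rfl

theorem val_buildPrenex_drop_of_mem_exPos (μ : ℕ → I.D) (hk : k ∈ exPos L) :
    (buildPrenex (L.drop k) k P).val I μ =
      ⨆ d, (buildPrenex (L.drop (k + 1)) (k + 1) P).val I (Function.update μ k d) := by
  obtain ⟨hkL, hk⟩ := mem_exPos.1 hk
  rw [mem_univPos, List.getD_eq_getElem _ _ hkL] at hk
  rw [List.drop_eq_getElem_cons hkL, buildPrenex, if_neg hk]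
  rfl

end Prenex

structure IsUnivStrategy {D : Type*} (L : List Bool) (θ : (ℕ → D) → ℕ → D) : Prop where
  apply_of_notMem : ∀ ν n, n ∉ univPos L → θ ν n = ν n
  congr : ∀ ν ν' n, n ∈ univPos L → (∀ i ∈ exPos (L.take n), ν i = ν' i) →
    θ ν n = θ ν' n

namespace IsUnivStrategy

variable {D : Type*} {L : List Bool} {θ : (ℕ → D) → ℕ → D}

theorem apply_eq_of_eqOn_lt (hθ : IsUnivStrategy L θ) {ν ν' : ℕ → D} {k n : ℕ}
    (h : ∀ i < k, ν i = ν' i) (hn : n ∈ univPos L) (hnk : n ≤ k) : θ ν n = θ ν' n :=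
  hθ.congr ν ν' n hn fun i hi => h i ((mem_exPos_take.1 hi).1.trans_le hnk)

theorem apply_eq_of_eqOn_exPos (hθ : IsUnivStrategy L θ) {ν ν' : ℕ → D} {n : ℕ}
    (h : ∀ i ∈ exPos L, ν i = ν' i) (hn : n < L.length) : θ ν n = θ ν' n := by
  by_cases hu : n ∈ univPos L
  · exact hθ.congr ν ν' n hu fun i hi => h i (mem_exPos_take.1 hi).2
  · rw [hθ.apply_of_notMem ν n hu, hθ.apply_of_notMem ν' n hu]
    exact h n (mem_exPos.2 ⟨hn, hu⟩)

theorem follows_update (hθ : IsUnivStrategy L θ) {μ : ℕ → D} {k : ℕ} (d : D)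
    (hμ : ∀ i < k, θ μ i = μ i) (hd : k ∈ univPos L → d = θ μ k) :
    ∀ i < k + 1, θ (Function.update μ k d) i = Function.update μ k d i := by
  intro i hi
  have hagree : ∀ j < k, Function.update μ k d j = μ j := fun j hj =>
    Function.update_of_ne hj.ne _ _
  by_cases hu : i ∈ univPos L
  · rw [hθ.apply_eq_of_eqOn_lt hagree hu (Nat.le_of_lt_succ hi)]
    rcases (Nat.lt_succ_iff_lt_or_eq.1 hi) with hik | rfl
    · rw [hμ i hik, hagree i hik]
    · rw [Function.update_self, hd hu]
  · exact hθ.apply_of_notMem _ i hu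

theorem val_buildPrenex_le {I : Interp S} {θ : (ℕ → I.D) → ℕ → I.D}
    (hθ : IsUnivStrategy L θ) {P : Formula S} (hclosed : ∀ v ∈ P.freeVars, v < L.length)
    (μ : ℕ → I.D) : (buildPrenex L 0 P).val I μ ≤ ⨆ ν, P.val I (θ ν) := by
  suffices ∀ k ≤ L.length, ∀ μ : ℕ → I.D, (∀ i < k, θ μ i = μ i) →
      (buildPrenex (L.drop k) k P).val I μ ≤ ⨆ ν, P.val I (θ ν) from
    this 0 (Nat.zero_le _) μ fun _ h => absurd h (Nat.not_lt_zero _)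
  intro k hk
  induction hk using Nat.decreasingInduction with
  | self =>
    intro μ hμ
    rw [List.drop_length]
    exact (Formula.val_congr I P fun v hv => (hμ v (hclosed v hv)).symm).trans_le
      (le_iSup (fun ν => P.val I (θ ν)) μ)
  | of_succ k hk ih =>
    intro μ hμ
    by_cases hu : k ∈ univPos L
    · rw [val_buildPrenex_drop_of_mem_univPos I P μ hu]
      exact (iInf_le _ (θ μ k)).trans (ih _ (hθ.follows_update _ hμ fun _ => rfl))
    · rw [val_buildPrenex_drop_of_mem_exPos I P μ (mem_exPos.2 ⟨hk, hu⟩)]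
      exact iSup_le fun d => ih _ (hθ.follows_update d hμ fun h => absurd h hu)

end IsUnivStrategy

section Skolem

variable {L : List Bool} {sk : ℕ → S.Func}

def skolemStrategy (J : Interp S) (L : List Bool) (sk : ℕ → S.Func) (ν : ℕ → J.D)
    (n : ℕ) : J.D :=
  (skSubstVal L sk n).eval J ν

theorem val_subst_skSubstVal (J : Interp S) {P : Formula S} (hQF : P.isQF) (ν : ℕ → J.D) :
    (P.subst (skSubstVal L sk)).val J ν = P.val J (skolemStrategy J L sk ν) :=
  Formula.val_subst_of_isQF J ν _ hQF

theorem skSubstVal_of_notMem {n : ℕ} (hn : n ∉ univPos L) :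
    skSubstVal L sk n = .var n := by
  rw [skSubstVal, if_neg (mem_univPos.not.1 hn)]

theorem isUnivStrategy_skolemStrategy (J : Interp S)
    (harity : ∀ j ∈ univPos L, S.fArity (sk j) = (exPos (L.take j)).length) :
    IsUnivStrategy L (skolemStrategy J L sk) where
  apply_of_notMem ν n hn := by rw [skolemStrategy, skSubstVal_of_notMem hn]; rfl
  congr ν ν' n hn h := by
    simp only [skolemStrategy, skSubstVal, if_pos (mem_univPos.1 hn), Term.eval]
    congr 1
    funext j
    have hj : (j : ℕ) < (exPos (L.take n)).length := harity n hn ▸ j.2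
    rw [List.getD_eq_getElem _ _ hj]
    exact h _ (List.getElem_mem hj)

theorem val_skolemFormVal (J : Interp S) {P : Formula S} (hQF : P.isQF)
    (hclosed : ∀ v ∈ P.freeVars, v < L.length)
    (harity : ∀ j ∈ univPos L, S.fArity (sk j) = (exPos (L.take j)).length) (μ : ℕ → J.D) :
    (skolemFormVal L sk P).val J μ = ⨆ ν, P.val J (skolemStrategy J L sk ν) := by
  refine le_antisymm (val_exCloseList_le J _ fun ν _ => ?_) (iSup_le fun ν => ?_)
  · rw [val_subst_skSubstVal J hQF]
    exact le_iSup (fun ν => P.val J (skolemStrategy J L sk ν)) ν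
  · set ν' : ℕ → J.D := fun n => if n ∈ exPos L then ν n else μ n
    have hν' : P.val J (skolemStrategy J L sk ν) = P.val J (skolemStrategy J L sk ν') :=
      Formula.val_congr J P fun v hv =>
        (isUnivStrategy_skolemStrategy J harity).apply_eq_of_eqOn_exPos
          (fun i hi => by simp [ν', hi]) (hclosed v hv)
    rw [hν', ← val_subst_skSubstVal J hQF]
    exact le_val_exCloseList J _ fun n hn => by simp [ν', hn]

end Skolem

section Realization

variable {L : List Bool} {sk : ℕ → S.Func}

open Classical in
/-- The arguments of `sk j` list the values of the variables `exPos (L.take j)` in order, and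
`idxOf` turns them back into an assignment of those variables. -/
noncomputable def Interp.withSkolemFuncs (I : Interp S) (L : List Bool) (sk : ℕ → S.Func)
    (θ : (ℕ → I.D) → ℕ → I.D) : Interp S :=
  { I with
    fI := fun f args =>
      if h : ∃ j ∈ univPos L, sk j = f then
        θ (fun n => (List.ofFn args).getD ((exPos (L.take h.choose)).idxOf n)
          (Classical.arbitrary I.D)) h.choose
      else I.fI f args }

theorem val_withSkolemFuncs (I : Interp S) (θ : (ℕ → I.D) → ℕ → I.D) {P : Formula S}
    (hfresh : ∀ j ∈ univPos L, sk j ∉ P.funcsIn) (μ : ℕ → I.D) :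
    P.val (I.withSkolemFuncs L sk θ) μ = P.val I μ :=
  Formula.val_withFuncs μ P fun _ hf => funext fun _ =>
    dif_neg fun ⟨j, hj, hjf⟩ => hfresh j hj (hjf ▸ hf)

theorem skolemStrategy_withSkolemFuncs (I : Interp S) {θ : (ℕ → I.D) → ℕ → I.D}
    (hθ : IsUnivStrategy L θ)
    (harity : ∀ j ∈ univPos L, S.fArity (sk j) = (exPos (L.take j)).length)
    (hinj : ∀ j ∈ univPos L, ∀ j' ∈ univPos L, sk j = sk j' → j = j') :
    skolemStrategy (I.withSkolemFuncs L sk θ) L sk = θ := by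
  funext (ν : ℕ → I.D) n
  by_cases hn : n ∈ univPos L
  · have h : ∃ j ∈ univPos L, sk j = sk n := ⟨n, hn, rfl⟩
    have hchoose : h.choose = n := hinj _ h.choose_spec.1 n hn h.choose_spec.2
    simp only [skolemStrategy, skSubstVal, if_pos (mem_univPos.1 hn), Term.eval,
      Interp.withSkolemFuncs, dif_pos h, hchoose]
    refine hθ.congr _ ν n hn fun i hi => ?_
    have hidx : (exPos (L.take n)).idxOf i < (exPos (L.take n)).length :=
      List.idxOf_lt_length_iff.2 hi
    have hidx' : (exPos (L.take n)).idxOf i < S.fArity (sk n) := harity n hn ▸ hidx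
    rw [List.getD_eq_getElem _ _ (by rwa [List.length_ofFn]), List.getElem_ofFn,
      List.getD_eq_getElem _ _ hidx, List.getElem_idxOf]
  · rw [hθ.apply_of_notMem ν n hn]
    exact congrArg (Term.eval (I.withSkolemFuncs L sk θ) ν) (skSubstVal_of_notMem hn)

end Realization

section BelowStrategy

variable (I : Interp S) (L : List Bool) (P : Formula S) (c : unitInterval)
  (μ : ℕ → I.D)

/-- Any value if no witness exists; along `belowPlay` one always does. -/
noncomputable def belowChoice (ρ : ℕ → I.D) (k : ℕ) : I.D :=
  Classical.epsilon fun d =>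
    (buildPrenex (L.drop (k + 1)) (k + 1) P).val I (Function.update ρ k d) < c

noncomputable def belowPlay (ν : ℕ → I.D) : ℕ → ℕ → I.D
  | 0 => μ
  | k + 1 => Function.update (belowPlay ν k) k
      (if k ∈ univPos L then belowChoice I L P c (belowPlay ν k) k else ν k)

noncomputable def belowStrategy (ν : ℕ → I.D) (n : ℕ) : I.D :=
  if n ∈ univPos L then belowChoice I L P c (belowPlay I L P c μ ν n) n else ν n

variable {I L P c μ}

theorem belowPlay_apply_of_lt (ν : ℕ → I.D) {k n : ℕ} (hn : n < k) :
    belowPlay I L P c μ ν k n = belowStrategy I L P c μ ν n := by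
  induction k with
  | zero => exact absurd hn (Nat.not_lt_zero n)
  | succ k ih =>
    rcases (Nat.lt_succ_iff_lt_or_eq.1 hn) with hnk | rfl
    · rw [belowPlay, Function.update_of_ne hnk.ne, ih hnk]
    · rw [belowPlay, Function.update_self, belowStrategy]

theorem belowPlay_congr {ν ν' : ℕ → I.D} {k : ℕ}
    (h : ∀ i < k, i ∉ univPos L → ν i = ν' i) :
    belowPlay I L P c μ ν k = belowPlay I L P c μ ν' k := by
  induction k with
  | zero => rfl
  | succ k ih =>
    rw [belowPlay, belowPlay, ih fun i hi => h i (Nat.lt_succ_of_lt hi)]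
    split_ifs with hk
    · rfl
    · rw [h k (Nat.lt_succ_self k) hk]

theorem isUnivStrategy_belowStrategy : IsUnivStrategy L (belowStrategy I L P c μ) where
  apply_of_notMem ν n hn := if_neg hn
  congr ν ν' n hn h := by
    simp only [belowStrategy, if_pos hn]
    rw [belowPlay_congr fun i hi hiu => h i (mem_exPos_take.2 ⟨hi, mem_exPos.2
      ⟨hi.trans (lt_length_of_mem_univPos hn), hiu⟩⟩)]

theorem val_buildPrenex_drop_belowPlay_lt (h : (buildPrenex L 0 P).val I μ < c)
    (ν : ℕ → I.D) {k : ℕ} (hk : k ≤ L.length) :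
    (buildPrenex (L.drop k) k P).val I (belowPlay I L P c μ ν k) < c := by
  induction k with
  | zero => exact h
  | succ k ih =>
    have hlt := ih (Nat.le_of_succ_le hk)
    by_cases hu : k ∈ univPos L
    · rw [val_buildPrenex_drop_of_mem_univPos I P _ hu, iInf_lt_iff] at hlt
      rw [belowPlay, if_pos hu]
      exact Classical.epsilon_spec hlt
    · rw [val_buildPrenex_drop_of_mem_exPos I P _ (mem_exPos.2 ⟨hk, hu⟩)] at hlt
      rw [belowPlay, if_neg hu]
      exact (le_iSup (fun d => (buildPrenex (L.drop (k + 1)) (k + 1) P).val I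
        (Function.update (belowPlay I L P c μ ν k) k d)) (ν k)).trans_lt hlt

theorem val_belowStrategy_lt (hclosed : ∀ v ∈ P.freeVars, v < L.length)
    (h : (buildPrenex L 0 P).val I μ < c) (ν : ℕ → I.D) :
    P.val I (belowStrategy I L P c μ ν) < c := by
  have hplay := val_buildPrenex_drop_belowPlay_lt h ν le_rfl
  rw [List.drop_length] at hplay
  rwa [Formula.val_congr I P fun v hv => (belowPlay_apply_of_lt ν (hclosed v hv)).symm]

end BelowStrategy

section Skolemization

variable {L : List Bool} {P : Formula S} {sk : ℕ → S.Func}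

theorem val_buildPrenex_le_val_skolemFormVal (hQF : P.isQF)
    (hclosed : ∀ v ∈ P.freeVars, v < L.length)
    (harity : ∀ j ∈ univPos L, S.fArity (sk j) = (exPos (L.take j)).length)
    (I : Interp S) (μ : ℕ → I.D) :
    (buildPrenex L 0 P).val I μ ≤ (skolemFormVal L sk P).val I μ := by
  rw [val_skolemFormVal I hQF hclosed harity]
  exact (isUnivStrategy_skolemStrategy I harity).val_buildPrenex_le hclosed μ

theorem exists_val_skolemFormVal_le (hQF : P.isQF)
    (hclosed : ∀ v ∈ P.freeVars, v < L.length)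
    (harity : ∀ j ∈ univPos L, S.fArity (sk j) = (exPos (L.take j)).length)
    (hfresh : ∀ j ∈ univPos L, sk j ∉ P.funcsIn)
    (hinj : ∀ j ∈ univPos L, ∀ j' ∈ univPos L, sk j = sk j' → j = j')
    {I : Interp S} {μ : ℕ → I.D} {c : unitInterval} (h : (buildPrenex L 0 P).val I μ < c) :
    ∃ (J : Interp S) (ρ : ℕ → J.D), (skolemFormVal L sk P).val J ρ ≤ c := by
  let J := I.withSkolemFuncs L sk (belowStrategy I L P c μ)
  refine ⟨J, μ, (val_skolemFormVal J hQF hclosed harity μ).trans_le ?_⟩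
  rw [skolemStrategy_withSkolemFuncs I isUnivStrategy_belowStrategy harity hinj]
  exact iSup_le fun ν =>
    ((val_withSkolemFuncs I _ hfresh _).trans_lt (val_belowStrategy_lt hclosed h ν)).le

theorem valid_buildPrenex_iff_valid_skolemFormVal (hQF : P.isQF)
    (hclosed : ∀ v ∈ P.freeVars, v < L.length)
    (harity : ∀ j ∈ univPos L, S.fArity (sk j) = (exPos (L.take j)).length)
    (hfresh : ∀ j ∈ univPos L, sk j ∉ P.funcsIn)
    (hinj : ∀ j ∈ univPos L, ∀ j' ∈ univPos L, sk j = sk j' → j = j') :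
    valid (buildPrenex L 0 P) ↔ valid (skolemFormVal L sk P) := by
  refine ⟨fun h I μ => top_unique ?_, fun h I μ => ?_⟩
  · exact (h I μ).symm.trans_le (val_buildPrenex_le_val_skolemFormVal hQF hclosed harity I μ)
  · by_contra hne
    obtain ⟨c, hlt, hc⟩ := exists_between (lt_of_le_of_ne le_top hne)
    obtain ⟨J, ρ, hJ⟩ := exists_val_skolemFormVal_le hQF hclosed harity hfresh hinj hlt
    exact hc.not_ge ((h J ρ).symm.le.trans hJ)

end Skolemization

theorem valid_and {A B : Formula S} : valid (.and A B) ↔ valid A ∧ valid B := by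
  simp only [valid, Formula.val, ← forall_and]
  exact forall_congr' fun I => forall_congr' fun μ => inf_eq_top_iff

theorem valid_bigAnd (A : Formula S) (l : List (Formula S)) :
    valid (bigAnd A l) ↔ valid A ∧ ∀ B ∈ l, valid B := by
  induction l generalizing A with
  | nil => simp [bigAnd]
  | cons B l ih => simp [bigAnd, valid_and, ih]

theorem valid_bigAnd_ofFn_succ {m : ℕ} (A : Fin (m + 1) → Formula S) :
    valid (bigAnd (A 0) (List.ofFn fun i : Fin m => A i.succ)) ↔ ∀ i, valid (A i) := by
  rw [valid_bigAnd, List.forall_mem_ofFn_iff, Fin.forall_fin_succ]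

end

/-- soundness of Skolemization for validity in prenex G△: a conjunction
`A₁ ∧ ⋯ ∧ Aₘ` of closed prenex formulas (prefix `pref i`, quantifier-free matrix `P i`)
is valid iff the conjunction of the Skolem forms `∃x̄ Aᵢ^S(x̄)` is valid, where for each
`i` the Skolem function symbols `sk i j` are fresh (pairwise distinct and not occurring
in `P i`) and of the correct arity. -/
theorem skolemization_validity_prenex_Gdelta (S : Signature) (m : ℕ)
    (pref : Fin (m + 1) → List Bool) (P : Fin (m + 1) → Formula S)
    (hQF : ∀ i, (P i).isQF)
    (hclosed : ∀ i, ∀ v ∈ (P i).freeVars, v < (pref i).length)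
    (sk : Fin (m + 1) → ℕ → S.Func)
    (harity : ∀ i, ∀ j ∈ univPos (pref i),
      S.fArity (sk i j) = (exPos (List.take j (pref i))).length)
    (hfresh : ∀ i, ∀ j ∈ univPos (pref i), sk i j ∉ (P i).funcsIn)
    (hinj : ∀ i, ∀ j ∈ univPos (pref i), ∀ j' ∈ univPos (pref i),
      sk i j = sk i j' → j = j') :
    valid (bigAnd (buildPrenex (pref 0) 0 (P 0))
        (List.ofFn (fun i : Fin m => buildPrenex (pref i.succ) 0 (P i.succ)))) ↔
      valid (bigAnd (skolemFormVal (pref 0) (sk 0) (P 0))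
        (List.ofFn (fun i : Fin m =>
          skolemFormVal (pref i.succ) (sk i.succ) (P i.succ)))) := by
  have key : ∀ i, valid (buildPrenex (pref i) 0 (P i)) ↔
      valid (skolemFormVal (pref i) (sk i) (P i)) := fun i =>
    valid_buildPrenex_iff_valid_skolemFormVal (hQF i) (hclosed i) (harity i) (hfresh i) (hinj i)
  rw [valid_bigAnd_ofFn_succ (fun i => buildPrenex (pref i) 0 (P i)),
    valid_bigAnd_ofFn_succ (fun i => skolemFormVal (pref i) (sk i) (P i))]
  exact forall_congr' key
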